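/- arXiv:2410.21919 — 4 statements merged into one kernel-verified Lean document; each statement's English description precedes it below -/
import Mathlib

section
/- Let P be a d×d real orthogonal projection matrix, let v ∈ ℝ^d be a unit vector with Pv = v, and let ε ∈ {+1, −1}. Then the Moore–Penrose pseudoinverse of the positive semidefinite matrix P(I_d + ε v vᵀ)P satisfies (P(I_d + ε v vᵀ)P)† ⪯ I_d in the Loewner order; that is, I_d − (P(I_d + ε v vᵀ)P)† is positive semidefinite. -/
open Matrix

/-- `B` is the Moore–Penrose pseudoinverse of the real matrix `A`
(the four Penrose conditions). -/
def IsMoorePenroseInv {d : ℕ} (A B : Matrix (Fin d) (Fin d) ℝ) : Prop :=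
  A * B * A = A ∧ B * A * B = B ∧ (A * B)ᵀ = A * B ∧ (B * A)ᵀ = B * A

/-- Uniqueness of the Moore–Penrose pseudoinverse. -/
lemma mp_unique {d : ℕ} {A B C : Matrix (Fin d) (Fin d) ℝ}
    (hB : IsMoorePenroseInv A B) (hC : IsMoorePenroseInv A C) : B = C := by
  obtain ⟨hB1, hB2, hB3, hB4⟩ := hB
  obtain ⟨hC1, hC2, hC3, hC4⟩ := hC
  have hBAC : B = B * A * C := by
    calc B = B * A * B := hB2.symm
    _ = B * (A * B) := by rw [mul_assoc]
    _ = B * (A * B)ᵀ := by rw [hB3]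
    _ = B * (A * C * A * B)ᵀ := by rw [hC1]
    _ = B * ((A * C) * (A * B))ᵀ := by rw [mul_assoc (A * C) A B]
    _ = B * ((A * B)ᵀ * (A * C)ᵀ) := by rw [transpose_mul]
    _ = B * ((A * B) * (A * C)) := by rw [hB3, hC3]
    _ = (B * A * B) * (A * C) := by simp only [← mul_assoc]
    _ = B * (A * C) := by rw [hB2]
    _ = B * A * C := by rw [mul_assoc]
  have hCAC : C = B * A * C := by
    calc C = C * A * C := hC2.symm
    _ = (C * A)ᵀ * C := by rw [hC4]
    _ = (C * (A * B * A))ᵀ * C := by rw [hB1]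
    _ = ((C * A) * (B * A))ᵀ * C := by
          rw [← mul_assoc C (A * B) A, ← mul_assoc C A B, mul_assoc (C * A) B A]
    _ = ((B * A)ᵀ * (C * A)ᵀ) * C := by rw [transpose_mul]
    _ = ((B * A) * (C * A)) * C := by rw [hB4, hC4]
    _ = (B * A) * (C * A * C) := by rw [mul_assoc, mul_assoc]
    _ = B * A * C := by rw [hC2]
  exact hBAC.trans hCAC.symm

lemma psd_smul_outer {d : ℕ} (c : ℝ) (hc : 0 ≤ c) (v : Fin d → ℝ) :
    (c • vecMulVec v v).PosSemidef := by
  have houter : ∀ x : Fin d → ℝ, vecMulVec v v *ᵥ x = (v ⬝ᵥ x) • v := by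
    intro x
    ext i
    simp only [mulVec, dotProduct, vecMulVec_apply, Pi.smul_apply, smul_eq_mul,
      Finset.sum_mul]
    exact Finset.sum_congr rfl (fun k _ => by ring)
  rw [posSemidef_iff_dotProduct_mulVec]
  constructor
  · ext i j
    simp [conjTranspose_apply, vecMulVec_apply, mul_comm]
  · intro x
    rw [smul_mulVec, houter x]
    have : star x ⬝ᵥ c • (v ⬝ᵥ x) • v = c * ((v ⬝ᵥ x) * (x ⬝ᵥ v)) := by
      simp [dotProduct_smul, smul_eq_mul, star_trivial]
    rw [this, dotProduct_comm x v]
    exact mul_nonneg hc (mul_self_nonneg _)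

lemma psd_one_sub_proj {d : ℕ} {Pm : Matrix (Fin d) (Fin d) ℝ}
    (hPsymm : Pmᵀ = Pm) (hPproj : Pm * Pm = Pm) :
    ((1 : Matrix (Fin d) (Fin d) ℝ) - Pm).PosSemidef := by
  have hherm : ((1 : Matrix (Fin d) (Fin d) ℝ) - Pm)ᴴ = 1 - Pm := by
    rw [conjTranspose_eq_transpose_of_trivial, transpose_sub, transpose_one, hPsymm]
  have key : (1 : Matrix (Fin d) (Fin d) ℝ) - Pm =
      ((1 : Matrix (Fin d) (Fin d) ℝ) - Pm)ᴴ * (1 - Pm) := by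
    rw [hherm]
    simp only [sub_mul, mul_sub, mul_one, one_mul, hPproj]
    abel
  rw [key]
  exact posSemidef_conjTranspose_mul_self _

theorem stmt_8 (d : ℕ) (Pm : Matrix (Fin d) (Fin d) ℝ)
    (hPsymm : Pmᵀ = Pm) (hPproj : Pm * Pm = Pm)
    (v : Fin d → ℝ) (hv : v ⬝ᵥ v = 1) (hPv : Pm *ᵥ v = v)
    (ε : ℝ) (hε : ε = 1 ∨ ε = -1)
    (B : Matrix (Fin d) (Fin d) ℝ)
    (hB : IsMoorePenroseInv (Pm * (1 + ε • vecMulVec v v) * Pm) B) :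
    ((1 : Matrix (Fin d) (Fin d) ℝ) - B).PosSemidef := by
  set M : Matrix (Fin d) (Fin d) ℝ := vecMulVec v v with hM
  have hPM : Pm * M = M := by
    ext i j
    simp only [hM, mul_apply, vecMulVec_apply]
    have hPvi := congrFun hPv i
    simp only [mulVec, dotProduct] at hPvi
    calc ∑ k, Pm i k * (v k * v j) = (∑ k, Pm i k * v k) * v j := by
          rw [Finset.sum_mul]; exact Finset.sum_congr rfl (fun k _ => by ring)
    _ = v i * v j := by rw [hPvi]
  have hMsymm : Mᵀ = M := by
    ext i j; simp [hM, transpose_apply, vecMulVec_apply, mul_comm]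
  have hMP : M * Pm = M := by
    have h := congrArg transpose hPM
    rwa [transpose_mul, hMsymm, hPsymm] at h
  have hMM : M * M = M := by
    ext i j
    simp only [hM, mul_apply, vecMulVec_apply]
    simp only [dotProduct] at hv
    calc ∑ k, v i * v k * (v k * v j) = ∑ k, v i * (v k * v k * v j) :=
          Finset.sum_congr rfl (fun k _ => by ring)
    _ = v i * ∑ k, v k * v k * v j := by rw [Finset.mul_sum]
    _ = v i * ((∑ k, v k * v k) * v j) := by rw [Finset.sum_mul]
    _ = v i * v j := by rw [hv, one_mul]
  have hA : Pm * (1 + ε • M) * Pm = Pm + ε • M := by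
    rw [mul_add, mul_one, add_mul, hPproj, mul_smul_comm, hPM, smul_mul_assoc, hMP]
  rcases hε with h1 | h1
  · subst h1
    set B0 : Matrix (Fin d) (Fin d) ℝ := Pm - (1/2 : ℝ) • M with hB0def
    have hAB0 : (Pm + (1:ℝ) • M) * B0 = Pm := by
      rw [hB0def]
      simp only [one_smul, add_mul, mul_sub, sub_mul, mul_smul_comm, smul_mul_assoc,
        hPproj, hPM, hMP, hMM]
      module
    have hB0A : B0 * (Pm + (1:ℝ) • M) = Pm := by
      rw [hB0def]
      simp only [one_smul, mul_add, add_mul, mul_sub, sub_mul, mul_smul_comm, smul_mul_assoc,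
        hPproj, hPM, hMP, hMM]
      module
    have hmp : IsMoorePenroseInv (Pm * (1 + (1:ℝ) • vecMulVec v v) * Pm) B0 := by
      rw [hA]
      refine ⟨?_, ?_, ?_, ?_⟩
      · rw [hAB0]
        simp only [one_smul, mul_add, mul_smul_comm, hPproj, hPM]
      · rw [hB0A, hB0def]
        simp only [mul_sub, mul_smul_comm, hPproj, hPM]
      · rw [hAB0, hPsymm]
      · rw [hB0A, hPsymm]
    have hBB0 : B = B0 := mp_unique hB hmp
    rw [hBB0, hB0def]
    have hsplit : (1 : Matrix (Fin d) (Fin d) ℝ) - (Pm - (1/2 : ℝ) • M) =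
        (1 - Pm) + (1/2 : ℝ) • M := by abel
    rw [hsplit, hM]
    exact (psd_one_sub_proj hPsymm hPproj).add (psd_smul_outer _ (by norm_num) v)
  · subst h1
    set B0 : Matrix (Fin d) (Fin d) ℝ := Pm - M with hB0def
    have hAeq : Pm + (-1 : ℝ) • M = B0 := by rw [hB0def]; module
    have hB0proj : B0 * B0 = B0 := by
      rw [hB0def]
      simp only [sub_mul, mul_sub, hPproj, hPM, hMP, hMM]
      abel
    have hB0symm : B0ᵀ = B0 := by
      rw [hB0def, transpose_sub, hPsymm, hMsymm]
    have hmp : IsMoorePenroseInv (Pm * (1 + (-1:ℝ) • vecMulVec v v) * Pm) B0 := by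
      rw [hA, hAeq]
      refine ⟨?_, ?_, ?_, ?_⟩
      · rw [hB0proj, hB0proj]
      · rw [hB0proj, hB0proj]
      · rw [hB0proj, hB0symm]
      · rw [hB0proj, hB0symm]
    have hBB0 : B = B0 := mp_unique hB hmp
    rw [hBB0, hB0def]
    have hsplit : (1 : Matrix (Fin d) (Fin d) ℝ) - (Pm - M) = (1 - Pm) + M := by abel
    rw [hsplit, hM]
    have hMpsd : (vecMulVec v v).PosSemidef := by
      have h := psd_smul_outer 1 (by norm_num) v
      rwa [one_smul] at h
    exact (psd_one_sub_proj hPsymm hPproj).add hMpsd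
end

section
/- Let P be a d×d real orthogonal projection matrix, let v ∈ ℝ^d be a unit vector with Pv = v, and let u_l, u_r ∈ ℝ^d be unit vectors. For ε ∈ {+1, −1} set m_ε := P(u_l u_rᵀ + ε u_r u_lᵀ)v. Then m₊ᵀ (P(I_d + v vᵀ)P)† m₊ + m₋ᵀ (P(I_d − v vᵀ)P)† m₋ ≤ 2((u_lᵀ v)² + (u_rᵀ v)²). -/
open Matrix

lemma vecMulVec_mulVec' {d : ℕ} (w u x : Fin d → ℝ) :
    vecMulVec w u *ᵥ x = (u ⬝ᵥ x) • w := by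
  ext i
  simp only [mulVec, dotProduct, vecMulVec_apply, Pi.smul_apply, smul_eq_mul,
    Finset.sum_mul]
  exact Finset.sum_congr rfl fun j _ => by ring

lemma mul_vecMulVec' {d : ℕ} (A : Matrix (Fin d) (Fin d) ℝ) (v w : Fin d → ℝ) :
    A * vecMulVec v w = vecMulVec (A *ᵥ v) w := by
  ext i j
  simp only [mul_apply, vecMulVec_apply, mulVec, dotProduct, Finset.sum_mul]
  exact Finset.sum_congr rfl fun k _ => by ring

lemma vecMulVec_mul' {d : ℕ} (v w : Fin d → ℝ) (A : Matrix (Fin d) (Fin d) ℝ) :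
    vecMulVec v w * A = vecMulVec v (Aᵀ *ᵥ w) := by
  ext i j
  simp only [mul_apply, vecMulVec_apply, mulVec, dotProduct, transpose_apply,
    Finset.mul_sum]
  exact Finset.sum_congr rfl fun k _ => by ring

lemma dot_swap {d : ℕ} (A : Matrix (Fin d) (Fin d) ℝ) (hA : Aᵀ = A)
    (x y : Fin d → ℝ) : (A *ᵥ x) ⬝ᵥ y = x ⬝ᵥ (A *ᵥ y) := by
  rw [dotProduct_mulVec, ← mulVec_transpose, hA]

lemma key_lemma {d : ℕ} (A B : Matrix (Fin d) (Fin d) ℝ) (hA : Aᵀ = A)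
    (h1 : A * B * A = A) (x m : Fin d → ℝ) (hx : A *ᵥ x = m) :
    m ⬝ᵥ (B *ᵥ m) = x ⬝ᵥ m := by
  have e1 : x ⬝ᵥ ((A * B * A) *ᵥ x) = m ⬝ᵥ (B *ᵥ m) := by
    rw [mul_assoc, ← mulVec_mulVec,
      ← dot_swap A hA, hx, ← mulVec_mulVec, hx]
  have e2 : x ⬝ᵥ ((A * B * A) *ᵥ x) = x ⬝ᵥ m := by rw [h1, hx]
  rw [← e1, e2]

theorem stmt_9 (d : ℕ) (Pm : Matrix (Fin d) (Fin d) ℝ)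
    (hPsymm : Pmᵀ = Pm) (hPproj : Pm * Pm = Pm)
    (v : Fin d → ℝ) (hv : v ⬝ᵥ v = 1) (hPv : Pm *ᵥ v = v)
    (ul ur : Fin d → ℝ) (hul : ul ⬝ᵥ ul = 1) (hur : ur ⬝ᵥ ur = 1)
    (Bp Bm : Matrix (Fin d) (Fin d) ℝ)
    (hBp : IsMoorePenroseInv (Pm * (1 + vecMulVec v v) * Pm) Bp)
    (hBm : IsMoorePenroseInv (Pm * (1 - vecMulVec v v) * Pm) Bm) :
    (Pm *ᵥ ((vecMulVec ul ur + vecMulVec ur ul) *ᵥ v)) ⬝ᵥ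
        (Bp *ᵥ (Pm *ᵥ ((vecMulVec ul ur + vecMulVec ur ul) *ᵥ v))) +
      (Pm *ᵥ ((vecMulVec ul ur - vecMulVec ur ul) *ᵥ v)) ⬝ᵥ
        (Bm *ᵥ (Pm *ᵥ ((vecMulVec ul ur - vecMulVec ur ul) *ᵥ v))) ≤
      2 * ((ul ⬝ᵥ v) ^ 2 + (ur ⬝ᵥ v) ^ 2) := by
  set W : Matrix (Fin d) (Fin d) ℝ := vecMulVec v v with hW
  -- W is symmetric
  have hWsymm : Wᵀ = W := by
    ext i j; simp [hW, vecMulVec_apply, mul_comm]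
  -- simplify the two matrices
  have hPW : Pm * W = W := by rw [hW, mul_vecMulVec', hPv]
  have hWP : W * Pm = W := by rw [hW, vecMulVec_mul', hPsymm, hPv]
  have hApdef : Pm * (1 + W) * Pm = Pm + W := by
    rw [mul_add, mul_one, add_mul, hPproj, hPW, hWP]
  have hAmdef : Pm * (1 - W) * Pm = Pm - W := by
    rw [mul_sub, mul_one, sub_mul, hPproj, hPW, hWP]
  have hApsymm : (Pm + W)ᵀ = Pm + W := by rw [transpose_add, hPsymm, hWsymm]
  have hAmsymm : (Pm - W)ᵀ = Pm - W := by rw [transpose_sub, hPsymm, hWsymm]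
  have hBp1 : (Pm + W) * Bp * (Pm + W) = Pm + W := by
    rw [← hApdef]; exact hBp.1
  have hBm1 : (Pm - W) * Bm * (Pm - W) = Pm - W := by
    rw [← hAmdef]; exact hBm.1
  set α : ℝ := ul ⬝ᵥ v with hα
  set β : ℝ := ur ⬝ᵥ v with hβ
  set a : Fin d → ℝ := Pm *ᵥ ul with ha
  set b : Fin d → ℝ := Pm *ᵥ ur with hb
  have hPa : Pm *ᵥ a = a := by rw [ha, mulVec_mulVec, hPproj]
  have hPb : Pm *ᵥ b = b := by rw [hb, mulVec_mulVec, hPproj]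
  have hva : v ⬝ᵥ a = α := by
    rw [ha, ← dot_swap Pm hPsymm, hPv, dotProduct_comm]
  have hvb : v ⬝ᵥ b = β := by
    rw [hb, ← dot_swap Pm hPsymm, hPv, dotProduct_comm]
  have haul : a ⬝ᵥ ul = a ⬝ᵥ a := by
    calc a ⬝ᵥ ul = (Pm *ᵥ a) ⬝ᵥ ul := by rw [hPa]
      _ = a ⬝ᵥ (Pm *ᵥ ul) := dot_swap Pm hPsymm a ul
      _ = a ⬝ᵥ a := by rw [← ha]
  have hbur : b ⬝ᵥ ur = b ⬝ᵥ b := by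
    calc b ⬝ᵥ ur = (Pm *ᵥ b) ⬝ᵥ ur := by rw [hPb]
      _ = b ⬝ᵥ (Pm *ᵥ ur) := dot_swap Pm hPsymm b ur
      _ = b ⬝ᵥ b := by rw [← hb]
  -- norms of a, b at most 1
  have haa : a ⬝ᵥ a ≤ 1 := by
    have h0 : (0:ℝ) ≤ (ul - a) ⬝ᵥ (ul - a) :=
      Finset.sum_nonneg fun i _ => mul_self_nonneg _
    have : (ul - a) ⬝ᵥ (ul - a) = 1 - a ⬝ᵥ a := by
      rw [sub_dotProduct, dotProduct_sub, dotProduct_sub, hul,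
        dotProduct_comm ul a, haul]
      ring
    linarith [this ▸ h0]
  have hbb : b ⬝ᵥ b ≤ 1 := by
    have h0 : (0:ℝ) ≤ (ur - b) ⬝ᵥ (ur - b) :=
      Finset.sum_nonneg fun i _ => mul_self_nonneg _
    have : (ur - b) ⬝ᵥ (ur - b) = 1 - b ⬝ᵥ b := by
      rw [sub_dotProduct, dotProduct_sub, dotProduct_sub, hur,
        dotProduct_comm ur b, hbur]
      ring
    linarith [this ▸ h0]
  -- the two vectors
  have hmp : Pm *ᵥ ((vecMulVec ul ur + vecMulVec ur ul) *ᵥ v) = β • a + α • b := by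
    rw [add_mulVec, vecMulVec_mulVec', vecMulVec_mulVec', ← hα, ← hβ,
      mulVec_add, mulVec_smul, mulVec_smul, ← ha, ← hb]
  have hmm : Pm *ᵥ ((vecMulVec ul ur - vecMulVec ur ul) *ᵥ v) = β • a - α • b := by
    rw [sub_mulVec, vecMulVec_mulVec', vecMulVec_mulVec', ← hα, ← hβ,
      mulVec_sub, mulVec_smul, mulVec_smul, ← ha, ← hb]
  set mp : Fin d → ℝ := β • a + α • b with hmpdef
  set mm : Fin d → ℝ := β • a - α • b with hmmdef
  have hPmp : Pm *ᵥ mp = mp := by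
    rw [hmpdef, mulVec_add, mulVec_smul, mulVec_smul, hPa, hPb]
  have hPmm : Pm *ᵥ mm = mm := by
    rw [hmmdef, mulVec_sub, mulVec_smul, mulVec_smul, hPa, hPb]
  have hvmp : v ⬝ᵥ mp = 2 * (α * β) := by
    rw [hmpdef, dotProduct_add, dotProduct_smul, dotProduct_smul, hva, hvb]
    simp; ring
  have hvmm : v ⬝ᵥ mm = 0 := by
    rw [hmmdef, dotProduct_sub, dotProduct_smul, dotProduct_smul, hva, hvb]
    simp; ring
  -- W action
  have hWvec : ∀ y : Fin d → ℝ, W *ᵥ y = (v ⬝ᵥ y) • v := fun y => by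
    rw [hW, vecMulVec_mulVec']
  -- solve A₊ x₊ = m₊
  have hxp : (Pm + W) *ᵥ (mp - ((α * β)) • v) = mp := by
    rw [add_mulVec, hWvec, mulVec_sub, mulVec_smul, hPmp, hPv,
      dotProduct_sub, dotProduct_smul, hvmp, hv]
    ext i
    simp [smul_eq_mul]
    ring
  have hxm : (Pm - W) *ᵥ mm = mm := by
    rw [sub_mulVec, hWvec, hPmm, hvmm]
    simp
  -- apply the key lemma
  have Tp : mp ⬝ᵥ (Bp *ᵥ mp) = (mp - (α * β) • v) ⬝ᵥ mp :=
    key_lemma _ _ hApsymm hBp1 _ _ hxp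
  have Tm : mm ⬝ᵥ (Bm *ᵥ mm) = mm ⬝ᵥ mm :=
    key_lemma _ _ hAmsymm hBm1 _ _ hxm
  have hba : b ⬝ᵥ a = a ⬝ᵥ b := dotProduct_comm b a
  have Tpval : (mp - (α * β) • v) ⬝ᵥ mp
      = β ^ 2 * (a ⬝ᵥ a) + α ^ 2 * (b ⬝ᵥ b) + 2 * (α * β) * (a ⬝ᵥ b)
        - 2 * (α * β) ^ 2 := by
    have hmpmp : mp ⬝ᵥ mp
        = β ^ 2 * (a ⬝ᵥ a) + α ^ 2 * (b ⬝ᵥ b) + 2 * (α * β) * (a ⬝ᵥ b) := by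
      rw [hmpdef]
      simp only [dotProduct_add, add_dotProduct, smul_dotProduct,
        dotProduct_smul, smul_eq_mul]
      simp only [hba]
      ring
    have hvm : ((α * β) • v) ⬝ᵥ mp = (α * β) * (2 * (α * β)) := by
      rw [smul_dotProduct, hvmp, smul_eq_mul]
    rw [sub_dotProduct, hmpmp, hvm]
    ring
  have Tmval : mm ⬝ᵥ mm
      = β ^ 2 * (a ⬝ᵥ a) + α ^ 2 * (b ⬝ᵥ b) - 2 * (α * β) * (a ⬝ᵥ b) := by
    rw [hmmdef]
    simp only [dotProduct_sub, sub_dotProduct, smul_dotProduct,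
      dotProduct_smul, smul_eq_mul]
    simp only [hba]
    ring
  rw [hmp, hmm, Tp, Tm, Tpval, Tmval]
  have h1 : 0 ≤ (1 - a ⬝ᵥ a) * β ^ 2 :=
    mul_nonneg (by linarith) (sq_nonneg β)
  have h2 : 0 ≤ (1 - b ⬝ᵥ b) * α ^ 2 :=
    mul_nonneg (by linarith) (sq_nonneg α)
  nlinarith [h1, h2, sq_nonneg (α * β)]
end

section
/- Let (Ω, 𝒜) and (U, ℬ) be measurable spaces, let D be a probability measure on U, let P_0 be a probability measure on Ω, and let (P_u)_{u∈U} be a Markov kernel from U to Ω such that P_u is absolutely continuous with respect to P_0 for D-almost every u, with jointly measurable Radon–Nikodym density (ω,u) ↦ (dP_u/dP_0)(ω). Let (M, ℳ) be a measurable space, let g, h : Ω → M be measurable, let φ : M × U → ℝ be measurable, let a, b ∈ ℝ, and let η > 0. Then ∫_U P_u[{ω : φ(g(ω), u) ≤ a} ∩ {ω : φ(h(ω), u) > b}] dD(u) ≤ (∫_U ∫_Ω ((dP_u/dP_0)(ω))^{1+η} 𝟙{φ(g(ω), u) ≤ a} dP_0(ω) dD(u))^{1/(1+η)} · (sup_{m∈M}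 D[{u : φ(m, u) > b}])^{η/(1+η)}. -/
open MeasureTheory ProbabilityTheory
open scoped ENNReal

theorem stmt_11 {Ω U M : Type*} [MeasurableSpace Ω] [MeasurableSpace U] [MeasurableSpace M]
    (D : Measure U) [IsProbabilityMeasure D]
    (P0 : Measure Ω) [IsProbabilityMeasure P0]
    (κ : Kernel U Ω) [IsMarkovKernel κ]
    (f : U → Ω → ℝ≥0∞) (hfmeas : Measurable (Function.uncurry f))
    (hκ : ∀ᵐ u ∂D, κ u = P0.withDensity (f u))
    (g h : Ω → M) (hg : Measurable g) (hh : Measurable h)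
    (φ : M → U → ℝ) (hφ : Measurable (Function.uncurry φ))
    (a b η : ℝ) (hη : 0 < η) :
    ∫⁻ u, κ u ({ω | φ (g ω) u ≤ a} ∩ {ω | b < φ (h ω) u}) ∂D ≤
      (∫⁻ u, ∫⁻ ω in {ω | φ (g ω) u ≤ a}, f u ω ^ (1 + η) ∂P0 ∂D) ^ (1 / (1 + η)) *
        (⨆ m : M, D {u | b < φ m u}) ^ (η / (1 + η)) := by
  classical
  set p : ℝ := 1 + η with hp
  set q : ℝ := (1 + η) / η with hq
  have hp1 : 1 < p := by simp only [hp]; linarith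
  have hpq : p.HolderConjugate q := Real.holderConjugate_iff.mpr ⟨hp1, by
    rw [hp, hq]
    field_simp⟩
  -- sets on the product space
  set A : Set (U × Ω) := {z | φ (g z.2) z.1 ≤ a} with hA
  set B : Set (U × Ω) := {z | b < φ (h z.2) z.1} with hB
  have hmA' : Measurable fun z : U × Ω => φ (g z.2) z.1 :=
    hφ.comp ((hg.comp measurable_snd).prodMk measurable_fst)
  have hmB' : Measurable fun z : U × Ω => φ (h z.2) z.1 :=
    hφ.comp ((hh.comp measurable_snd).prodMk measurable_fst)
  have hAmeas : MeasurableSet A := measurableSet_le hmA' measurable_const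
  have hBmeas : MeasurableSet B := measurableSet_lt measurable_const hmB'
  set F : U × Ω → ℝ≥0∞ := A.indicator (fun z => f z.1 z.2) with hF
  set G : U × Ω → ℝ≥0∞ := B.indicator 1 with hG
  have hFm : Measurable F := hfmeas.indicator hAmeas
  have hGm : Measurable G := measurable_one.indicator hBmeas
  -- Step 1: LHS equals product integral of F * G
  have hstep1 : ∫⁻ u, κ u ({ω | φ (g ω) u ≤ a} ∩ {ω | b < φ (h ω) u}) ∂D
      = ∫⁻ z, (F * G) z ∂(D.prod P0) := by
    rw [show (∫⁻ z, (F * G) z ∂(D.prod P0)) = ∫⁻ u, ∫⁻ ω, F (u, ω) * G (u, ω) ∂P0 ∂D from by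
      simpa only [Pi.mul_apply] using
        MeasureTheory.lintegral_prod (fun z => F z * G z) ((hFm.mul hGm).aemeasurable)]
    refine lintegral_congr_ae ?_
    filter_upwards [hκ] with u hu
    rw [hu]
    have hSmeas : MeasurableSet ({ω | φ (g ω) u ≤ a} ∩ {ω | b < φ (h ω) u}) := by
      refine MeasurableSet.inter ?_ ?_
      · exact measurableSet_le (hφ.comp (hg.prodMk measurable_const)) measurable_const
      · exact measurableSet_lt measurable_const (hφ.comp (hh.prodMk measurable_const))
    rw [MeasureTheory.withDensity_apply _ hSmeas, ← lintegral_indicator hSmeas]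
    refine lintegral_congr fun ω => ?_
    simp only [Set.indicator_apply, Set.mem_inter_iff, Set.mem_setOf_eq, Pi.mul_apply, hF, hG,
      hA, hB, Pi.one_apply]
    by_cases h1 : φ (g ω) u ≤ a <;> by_cases h2 : b < φ (h ω) u <;> simp [h1, h2]
  -- Step 2: Hölder
  have hholder := ENNReal.lintegral_mul_le_Lp_mul_Lq (D.prod P0) hpq hFm.aemeasurable
    hGm.aemeasurable
  -- Step 3: identify the F^p integral
  have hFp : ∫⁻ z, F z ^ p ∂(D.prod P0)
      = ∫⁻ u, ∫⁻ ω in {ω | φ (g ω) u ≤ a}, f u ω ^ (1 + η) ∂P0 ∂D := by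
    have hmeas : AEMeasurable (fun z : U × Ω => F z ^ p) (D.prod P0) :=
      (hFm.pow_const p).aemeasurable
    rw [MeasureTheory.lintegral_prod _ hmeas]
    refine lintegral_congr fun u => ?_
    have hs : MeasurableSet {ω | φ (g ω) u ≤ a} :=
      measurableSet_le (hφ.comp (hg.prodMk measurable_const)) measurable_const
    rw [← lintegral_indicator hs]
    refine lintegral_congr fun ω => ?_
    simp only [Set.indicator_apply, Set.mem_setOf_eq, hF, hA]
    by_cases h1 : φ (g ω) u ≤ a
    · simp [h1, hp]
    · simp [h1, ENNReal.zero_rpow_of_pos (lt_trans zero_lt_one hp1)]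
  -- Step 4: bound the G^q integral
  have hGq : (∫⁻ z, G z ^ q ∂(D.prod P0)) ≤ ⨆ m : M, D {u | b < φ m u} := by
    have hGq1 : ∀ z, G z ^ q = G z := by
      intro z
      simp only [hG, Set.indicator_apply, Pi.one_apply]
      by_cases h1 : z ∈ B
      · simp [h1]
      · simp [h1, ENNReal.zero_rpow_of_pos hpq.symm.pos]
    simp only [hGq1]
    rw [MeasureTheory.lintegral_prod_symm _ hGm.aemeasurable]
    calc ∫⁻ ω, ∫⁻ u, G (u, ω) ∂D ∂P0
        ≤ ∫⁻ ω, ⨆ m : M, D {u | b < φ m u} ∂P0 := by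
          refine lintegral_mono fun ω => ?_
          have : ∫⁻ u, G (u, ω) ∂D = D {u | b < φ (h ω) u} := by
            have hs : MeasurableSet {u | b < φ (h ω) u} :=
              measurableSet_lt measurable_const (hφ.comp (measurable_const.prodMk measurable_id))
            rw [← lintegral_indicator_one hs]
            rfl
          rw [this]
          exact le_iSup (fun m => D {u | b < φ m u}) (h ω)
      _ = ⨆ m : M, D {u | b < φ m u} := by
          simp [lintegral_const]
  -- Put things together
  have hq_inv : 1 / q = η / (1 + η) := by
    rw [hq, one_div_div]
  calc ∫⁻ u, κ u ({ω | φ (g ω) u ≤ a} ∩ {ω | b < φ (h ω) u}) ∂D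
      = ∫⁻ z, (F * G) z ∂(D.prod P0) := hstep1
    _ ≤ (∫⁻ z, F z ^ p ∂(D.prod P0)) ^ (1 / p) * (∫⁻ z, G z ^ q ∂(D.prod P0)) ^ (1 / q) :=
        hholder
    _ ≤ (∫⁻ u, ∫⁻ ω in {ω | φ (g ω) u ≤ a}, f u ω ^ (1 + η) ∂P0 ∂D) ^ (1 / (1 + η)) *
        (⨆ m : M, D {u | b < φ m u}) ^ (η / (1 + η)) := by
        rw [hFp, hq_inv]
        exact mul_le_mul_right (ENNReal.rpow_le_rpow hGq (by positivity)) _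
end

section
/- Let λ > 1 and δ ∈ (0, e^{−1}), and set τ₀ := 64 λ^{−2} (λ−1)^{−2} (log(1/δ) + 1/log λ). Then the series ∑_{k=0}^{∞} exp(−τ₀ λ^{4(k+1)} (λ−1)² / (4λ²)) converges and its sum is at most δ. -/
open Real

theorem stmt_12 (lam δ : ℝ) (hlam : 1 < lam) (hδ : δ ∈ Set.Ioo 0 (exp (-1)))
    (τ₀ : ℝ)
    (hτ₀ : τ₀ = 64 * (lam ^ 2)⁻¹ * ((lam - 1) ^ 2)⁻¹ * (log (1 / δ) + 1 / log lam)) :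
    Summable (fun k : ℕ => exp (-(τ₀ * lam ^ (4 * (k + 1)) * (lam - 1) ^ 2 / (4 * lam ^ 2)))) ∧
      ∑' k : ℕ, exp (-(τ₀ * lam ^ (4 * (k + 1)) * (lam - 1) ^ 2 / (4 * lam ^ 2))) ≤ δ := by
  obtain ⟨hδ0, hδ1⟩ := hδ
  have hlam0 : (0:ℝ) < lam := by linarith
  have hlamne : lam ≠ 0 := ne_of_gt hlam0
  have hlm1 : lam - 1 ≠ 0 := by intro h; linarith [sub_eq_zero.mp h]
  have hL : 0 < log lam := Real.log_pos hlam
  have he1 : Real.exp (-1) < 1 := by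
    rw [Real.exp_lt_one_iff]; norm_num
  have hd1 : δ < 1 := lt_trans hδ1 he1
  have hlogδ : 1 ≤ log (1/δ) := by
    have h1 : log δ < log (Real.exp (-1)) := Real.log_lt_log hδ0 hδ1
    rw [Real.log_exp] at h1
    rw [one_div, Real.log_inv]
    linarith
  set c : ℝ := 16 * log (1/δ) + 16 / log lam with hc
  have hcpos : 0 < c := by positivity
  have hc16 : 16 ≤ c * log lam := by
    have h : 16 / log lam * log lam = 16 := div_mul_cancel₀ 16 (ne_of_gt hL)
    have h2 : (0:ℝ) ≤ 16 * log (1/δ) * log lam :=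
      mul_nonneg (by linarith) hL.le
    rw [hc, add_mul, h]
    linarith
  have hEk : ∀ k : ℕ, τ₀ * lam ^ (4 * (k + 1)) * (lam - 1) ^ 2 / (4 * lam ^ 2)
      = c * lam ^ (4 * k) := by
    intro k
    have hp : lam ^ (4 * (k + 1)) = lam ^ (4 * k) * lam ^ 4 := by
      rw [← pow_add]; ring_nf
    rw [hτ₀, hp, hc]
    field_simp
    ring
  -- key pointwise bound
  have hbound : ∀ k : ℕ, exp (-(τ₀ * lam ^ (4 * (k + 1)) * (lam - 1) ^ 2 / (4 * lam ^ 2)))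
      ≤ exp (-c) * (exp (-64)) ^ k := by
    intro k
    rw [hEk k, ← Real.exp_nat_mul, ← Real.exp_add]
    apply Real.exp_le_exp.mpr
    have hpow : lam ^ (4 * k) = Real.exp ((4 * k : ℕ) * log lam) := by
      rw [Real.exp_nat_mul, Real.exp_log hlam0]
    have hexp : 1 + (4 * k : ℕ) * log lam ≤ lam ^ (4 * k) := by
      rw [hpow]; linarith [Real.add_one_le_exp (((4 * k : ℕ) : ℝ) * log lam)]
    have h1 : c * (1 + (4 * k : ℕ) * log lam) ≤ c * lam ^ (4 * k) :=
      mul_le_mul_of_nonneg_left hexp hcpos.le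
    have hk0 : (0:ℝ) ≤ (k : ℝ) := Nat.cast_nonneg k
    push_cast at h1 ⊢
    nlinarith [mul_le_mul_of_nonneg_left hc16 (by positivity : (0:ℝ) ≤ 4 * (k:ℝ))]
  have hgeo : Summable (fun k : ℕ => exp (-c) * (exp (-64)) ^ k) := by
    apply Summable.mul_left
    exact summable_geometric_of_lt_one (Real.exp_pos _).le (by
      rw [Real.exp_lt_one_iff]; norm_num)
  have hsum : Summable (fun k : ℕ => exp (-(τ₀ * lam ^ (4 * (k + 1)) * (lam - 1) ^ 2 / (4 * lam ^ 2)))) := by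
    apply Summable.of_nonneg_of_le (fun k => (Real.exp_pos _).le) hbound hgeo
  refine ⟨hsum, ?_⟩
  have htsum : ∑' k : ℕ, exp (-(τ₀ * lam ^ (4 * (k + 1)) * (lam - 1) ^ 2 / (4 * lam ^ 2)))
      ≤ ∑' k : ℕ, exp (-c) * (exp (-64)) ^ k := Summable.tsum_le_tsum hbound hsum hgeo
  have hgeoval : ∑' k : ℕ, exp (-c) * (exp (-64)) ^ k = exp (-c) * (1 - exp (-64))⁻¹ := by
    rw [tsum_mul_left, tsum_geometric_of_lt_one (Real.exp_pos _).le (by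
      rw [Real.exp_lt_one_iff]; norm_num)]
  -- final bound
  have he2 : Real.exp (-1) ≤ 1/2 := by
    rw [Real.exp_neg]
    rw [inv_le_iff_one_le_mul₀ (Real.exp_pos 1)]
    nlinarith [Real.add_one_le_exp (1:ℝ)]
  have he64 : Real.exp (-64) ≤ 1/2 := le_trans (Real.exp_le_exp.mpr (by norm_num)) he2
  have hec : Real.exp (-c) ≤ δ ^ 16 := by
    have : -c ≤ 16 * log δ := by
      rw [hc, one_div, Real.log_inv]
      have : 0 < 16 / log lam := by positivity
      linarith
    calc Real.exp (-c) ≤ Real.exp (16 * log δ) := Real.exp_le_exp.mpr this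
      _ = δ ^ 16 := by
          rw [show (16:ℝ) * log δ = ((16:ℕ):ℝ) * log δ by norm_num,
            Real.exp_nat_mul, Real.exp_log hδ0]
  have hδ15 : δ ^ 15 ≤ δ := by
    calc δ ^ 15 ≤ δ ^ 1 := pow_le_pow_of_le_one hδ0.le hd1.le (by norm_num)
      _ = δ := pow_one δ
  have hfin : Real.exp (-c) * (1 - Real.exp (-64))⁻¹ ≤ δ := by
    have hpos : (0:ℝ) < 1 - Real.exp (-64) := by linarith
    rw [mul_inv_le_iff₀ hpos]
    have : δ ^ 16 = δ * δ ^ 15 := by ring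
    nlinarith [pow_nonneg hδ0.le 15, hδ1.le]
  linarith [htsum, hgeoval ▸ htsum]
end
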